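/- Let ϑ₁ be the random Fibonacci substitution a ↦ {ab, ba}, b ↦ {a}. If u is a word such that some word in the set ϑ₁ᵖ(a)·u·{ab} or in ϑ₁ᵖ(a)·u·{ba} is ϑ₁-legal, then both the set ϑ₁ᵖ(a)·ϑ₁(u)·{ab} and the set ϑ₁ᵖ(a)·ϑ₁(u)·ϑ₁(b)·{ba} contain ϑ₁-legal words. -/

import Mathlib

/-- Two-letter alphabet. -/
inductive AB : Type
  | a : AB
  | b : AB
deriving DecidableEq

/-- Extension of a random substitution to words, by setwise concatenation. -/
def substW (θ : AB → Set (List AB)) : List AB → Set (List AB)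
  | [] => {[]}
  | x :: w => {u | ∃ v ∈ θ x, ∃ t ∈ substW θ w, u = v ++ t}

/-- Extension of a random substitution to sets of words. -/
def substS (θ : AB → Set (List AB)) (A : Set (List AB)) : Set (List AB) :=
  ⋃ w ∈ A, substW θ w

/-- Level-`n` inflation words of the letter `x`. -/
def substIter (θ : AB → Set (List AB)) (n : ℕ) (x : AB) : Set (List AB) :=
  (substS θ)^[n] {[x]}

/-- A word is legal if it is a subword of some level-`k` inflation word. -/
def legalW (θ : AB → Set (List AB)) (u : List AB) : Prop :=
  ∃ (k : ℕ) (x : AB), ∃ w ∈ substIter θ k x, u <:+: w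

/-- The random Fibonacci substitution a ↦ {ab, ba}, b ↦ {a}. -/
def randFib : AB → Set (List AB)
  | AB.a => {[AB.a, AB.b], [AB.b, AB.a]}
  | AB.b => {[AB.a]}

/-!
For `v ∈ ϑ₁ᵖ(a)`, the set `ϑ₁(v)` meets both halves `ϑ₁ᵖ(a)ϑ₁ᵖ(b)` and `ϑ₁ᵖ(b)ϑ₁ᵖ(a)` of
`ϑ₁ᵖ⁺¹(a)`, by induction on `p`; in particular `ϑ₁(v)` contains a word `α v'` with
`v' ∈ ϑ₁ᵖ(a)`. Both `ab` and `ba` have `aba` among their images, so applying `ϑ₁` to a legal word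
`v u ab` or `v u ba` yields the legal word `α v' u' aba`, which contains `v' u' ab` and `v' u' a ba`.
-/

open Function Set

section Substitution

variable {θ : AB → Set (List AB)}

theorem substW_append (θ : AB → Set (List AB)) (x y : List AB) :
    substW θ (x ++ y) = image2 (· ++ ·) (substW θ x) (substW θ y) := by
  induction x with
  | nil => simp [substW]
  | cons z x ih =>
    ext w
    simp only [List.cons_append, substW, ih, mem_ofPred_eq, mem_image2]
    constructor
    · rintro ⟨v, hv, _, ⟨s, hs, t, ht, rfl⟩, rfl⟩
      exact ⟨v ++ s, ⟨v, hv, s, hs, rfl⟩, t, ht, by simp⟩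
    · rintro ⟨_, ⟨v, hv, s, hs, rfl⟩, t, ht, rfl⟩
      exact ⟨v, hv, s ++ t, ⟨s, hs, t, ht, rfl⟩, by simp⟩

theorem append_mem_substW_append {x y s t : List AB} (hs : s ∈ substW θ x)
    (ht : t ∈ substW θ y) : s ++ t ∈ substW θ (x ++ y) :=
  substW_append θ x y ▸ mem_image2_of_mem hs ht

theorem substW_singleton (θ : AB → Set (List AB)) (x : AB) : substW θ [x] = θ x := by
  ext w
  simp [substW]

theorem substW_nonempty (hθ : ∀ x, (θ x).Nonempty) (w : List AB) : (substW θ w).Nonempty := by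
  induction w with
  | nil => exact singleton_nonempty _
  | cons x w ih =>
    obtain ⟨v, hv⟩ := hθ x
    obtain ⟨t, ht⟩ := ih
    exact ⟨v ++ t, v, hv, t, ht, rfl⟩

theorem mem_substS {A : Set (List AB)} {w : List AB} :
    w ∈ substS θ A ↔ ∃ v ∈ A, w ∈ substW θ v := by
  simp [substS]

theorem substS_singleton (θ : AB → Set (List AB)) (w : List AB) : substS θ {w} = substW θ w := by
  simp [substS]

theorem semiconj₂_substS_union : Semiconj₂ (substS θ) (· ∪ ·) (· ∪ ·) :=
  fun A B => biUnion_union A B _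

theorem semiconj₂_substS_image2_append :
    Semiconj₂ (substS θ) (image2 (· ++ ·)) (image2 (· ++ ·)) := by
  intro A B
  ext w
  simp only [mem_substS, mem_image2]
  constructor
  · rintro ⟨_, ⟨s, hs, t, ht, rfl⟩, hw⟩
    obtain ⟨s', hs', t', ht', rfl⟩ := mem_image2.1 (substW_append θ s t ▸ hw)
    exact ⟨s', ⟨s, hs, hs'⟩, t', ⟨t, ht, ht'⟩, rfl⟩
  · rintro ⟨s', ⟨s, hs, hs'⟩, t', ⟨t, ht, ht'⟩, rfl⟩
    exact ⟨s ++ t, ⟨s, hs, t, ht, rfl⟩, append_mem_substW_append hs' ht'⟩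

theorem substIter_succ_eq_iterate (θ : AB → Set (List AB)) (p : ℕ) (x : AB) :
    substIter θ (p + 1) x = (substS θ)^[p] (θ x) := by
  rw [substIter, iterate_succ_apply, substS_singleton, substW_singleton]

theorem mem_substIter_succ {p : ℕ} {x : AB} {v w : List AB} (hv : v ∈ substIter θ p x)
    (hw : w ∈ substW θ v) : w ∈ substIter θ (p + 1) x := by
  rw [substIter, iterate_succ_apply']
  exact mem_substS.2 ⟨v, hv, hw⟩

theorem legalW.of_infix {y z : List AB} (hy : legalW θ y) (hz : z <:+: y) : legalW θ z :=
  let ⟨k, x, w, hw, hyw⟩ := hy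
  ⟨k, x, w, hw, hz.trans hyw⟩

theorem legalW.of_mem_substW (hθ : ∀ x, (θ x).Nonempty) {y y' : List AB} (hy : legalW θ y)
    (hy' : y' ∈ substW θ y) : legalW θ y' := by
  obtain ⟨k, x, _, hw, L, R, rfl⟩ := hy
  obtain ⟨L', hL'⟩ := substW_nonempty hθ L
  obtain ⟨R', hR'⟩ := substW_nonempty hθ R
  exact ⟨k + 1, x, L' ++ y' ++ R',
    mem_substIter_succ hw (append_mem_substW_append (append_mem_substW_append hL' hy') hR'),
    L', R', rfl⟩

end Substitution

section RandomFibonacci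

theorem randFib_nonempty (x : AB) : (randFib x).Nonempty := by
  cases x
  exacts [insert_nonempty _ _, singleton_nonempty _]

theorem substIter_randFib_succ_a (p : ℕ) :
    substIter randFib (p + 1) AB.a =
      image2 (· ++ ·) (substIter randFib p AB.a) (substIter randFib p AB.b) ∪
      image2 (· ++ ·) (substIter randFib p AB.b) (substIter randFib p AB.a) := by
  have h : randFib AB.a =
      image2 (· ++ ·) {[AB.a]} {[AB.b]} ∪ image2 (· ++ ·) {[AB.b]} {[AB.a]} := by
    rw [image2_singleton, image2_singleton, ← insert_eq]
    rfl
  rw [substIter_succ_eq_iterate, h, (semiconj₂_substS_union.iterate p).eq,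
    (semiconj₂_substS_image2_append.iterate p).eq, (semiconj₂_substS_image2_append.iterate p).eq]
  rfl

theorem substIter_randFib_succ_b (p : ℕ) :
    substIter randFib (p + 1) AB.b = substIter randFib p AB.a :=
  substIter_succ_eq_iterate randFib p AB.b

theorem exists_append_mem_substW_randFib {p : ℕ} {v : List AB}
    (hv : v ∈ substIter randFib p AB.a) :
    (∃ s ∈ substIter randFib p AB.a, ∃ t ∈ substIter randFib p AB.b,
        s ++ t ∈ substW randFib v) ∧
    (∃ t ∈ substIter randFib p AB.b, ∃ s ∈ substIter randFib p AB.a,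
        t ++ s ∈ substW randFib v) := by
  induction p generalizing v with
  | zero =>
    obtain rfl : v = [AB.a] := hv
    exact ⟨⟨[AB.a], rfl, [AB.b], rfl, by simp [substW_singleton, randFib]⟩,
      ⟨[AB.b], rfl, [AB.a], rfl, by simp [substW_singleton, randFib]⟩⟩
  | succ p ih =>
    have hsucc := substIter_randFib_succ_a p
    rw [substIter_randFib_succ_b]
    rw [hsucc] at hv
    rcases hv with ⟨s, hs, t, ht, rfl⟩ | ⟨t, ht, s, hs, rfl⟩
    · obtain ⟨s₁, hs₁⟩ := substW_nonempty randFib_nonempty s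
      obtain ⟨t₁, ht₁⟩ := substW_nonempty randFib_nonempty t
      have ht₁a : t₁ ∈ substIter randFib p AB.a :=
        substIter_randFib_succ_b p ▸ mem_substIter_succ ht ht₁
      obtain ⟨⟨s', hs', s'', hs'', hs's''⟩, -⟩ := ih hs
      refine ⟨⟨s₁, mem_substIter_succ hs hs₁, t₁, ht₁a, append_mem_substW_append hs₁ ht₁⟩,
        ⟨s', hs', s'' ++ t₁, hsucc ▸ Or.inr (mem_image2_of_mem hs'' ht₁a), ?_⟩⟩
      simpa using append_mem_substW_append hs's'' ht₁
    · obtain ⟨s₁, hs₁⟩ := substW_nonempty randFib_nonempty s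
      obtain ⟨t₁, ht₁⟩ := substW_nonempty randFib_nonempty t
      have ht₁a : t₁ ∈ substIter randFib p AB.a :=
        substIter_randFib_succ_b p ▸ mem_substIter_succ ht ht₁
      obtain ⟨-, ⟨s', hs', s'', hs'', hs's''⟩⟩ := ih hs
      refine ⟨⟨t₁ ++ s', hsucc ▸ Or.inl (mem_image2_of_mem ht₁a hs'), s'', hs'', ?_⟩,
        ⟨t₁, ht₁a, s₁, mem_substIter_succ hs hs₁, append_mem_substW_append ht₁ hs₁⟩⟩
      simpa using append_mem_substW_append ht₁ hs's''

theorem aba_mem_substW_randFib {X : List AB} (hX : X ∈ randFib AB.a) :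
    [AB.a, AB.b, AB.a] ∈ substW randFib X := by
  rcases hX with rfl | rfl <;> simp [substW, randFib]

end RandomFibonacci

/-- Technical lemma for random Fibonacci: if some word in `ϑ₁ᵖ(a)·u·{ab}` or in
`ϑ₁ᵖ(a)·u·{ba}` is legal, then both `ϑ₁ᵖ(a)·ϑ₁(u)·{ab}` and
`ϑ₁ᵖ(a)·ϑ₁(u)·ϑ₁(b)·{ba}` contain legal words. -/
theorem randFib_step (p : ℕ) (u : List AB)
    (h : (∃ v ∈ substIter randFib p AB.a, legalW randFib (v ++ u ++ [AB.a, AB.b])) ∨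
         (∃ v ∈ substIter randFib p AB.a, legalW randFib (v ++ u ++ [AB.b, AB.a]))) :
    (∃ v ∈ substIter randFib p AB.a, ∃ u' ∈ substW randFib u,
        legalW randFib (v ++ u' ++ [AB.a, AB.b])) ∧
    (∃ v ∈ substIter randFib p AB.a, ∃ u' ∈ substW randFib u,
        ∃ w ∈ randFib AB.b, legalW randFib (v ++ u' ++ w ++ [AB.b, AB.a])) := by
  obtain ⟨v, hv, X, hX, hlegal⟩ :
      ∃ v ∈ substIter randFib p AB.a, ∃ X ∈ randFib AB.a, legalW randFib (v ++ u ++ X) := by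
    rcases h with ⟨v, hv, h⟩ | ⟨v, hv, h⟩
    exacts [⟨v, hv, _, Or.inl rfl, h⟩, ⟨v, hv, _, Or.inr rfl, h⟩]
  obtain ⟨-, α, -, v', hv', hαv'⟩ := exists_append_mem_substW_randFib hv
  obtain ⟨u', hu'⟩ := substW_nonempty randFib_nonempty u
  have hlegal' : legalW randFib (α ++ v' ++ u' ++ [AB.a, AB.b, AB.a]) :=
    hlegal.of_mem_substW randFib_nonempty <| append_mem_substW_append
      (append_mem_substW_append hαv' hu') (aba_mem_substW_randFib hX)
  exact ⟨⟨v', hv', u', hu', hlegal'.of_infix ⟨α, [AB.a], by simp⟩⟩,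
    ⟨v', hv', u', hu', [AB.a], rfl, hlegal'.of_infix ⟨α, [], by simp⟩⟩⟩
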